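/- arXiv:2303.16366 — 2 statements merged into one kernel-verified Lean document; each statement's English description precedes it below -/
import Mathlib

section
/- Let q be a prime power and let m be an integer with 0 ≤ m ≤ q³. Then the cardinality of I(m) = {(i,j) ∈ ℕ² : 0 ≤ j ≤ q−1 and iq + j(q+1) ≤ m} equals, when q²−q−2 < m < q³, the value m − q(q−1)/2 + 1. -/
/-- For a prime power `q` and `q² - q - 2 < m < q³`, the cardinality of
`I(m) = {(i,j) : j ≤ q-1, iq + j(q+1) ≤ m}` equals `m - q(q-1)/2 + 1`. -/
theorem card_I_m (q m : ℕ) (hq : IsPrimePow q) (hm₀ : m ≤ q ^ 3)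
    (hlow : q ^ 2 - q - 2 < m) (hhigh : m < q ^ 3) :
    Nat.card {p : ℕ × ℕ // p.2 ≤ q - 1 ∧ p.1 * q + p.2 * (q + 1) ≤ m}
      = m - q * (q - 1) / 2 + 1 := by
  have hq2 : 2 ≤ q := hq.two_le
  have hq0 : 0 < q := by omega
  have hsq : q ^ 2 = q * q := sq q
  have hm : q * q - q - 1 ≤ m := by omega
  -- key computation for the forward map
  have key : ∀ i j : ℕ, j < q →
      (i * q + j * (q + 1)) % q = j ∧ (i * q + j * (q + 1)) / q = i + j := by
    intro i j hj
    have h1 : i * q + j * (q + 1) = q * (i + j) + j := by ring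
    rw [h1, Nat.mul_add_mod, Nat.mul_add_div hq0, Nat.mod_eq_of_lt hj,
      Nat.div_eq_of_lt hj]
    omega
  -- the bijection onto representable numbers ≤ m
  have e : {p : ℕ × ℕ // p.2 ≤ q - 1 ∧ p.1 * q + p.2 * (q + 1) ≤ m} ≃
      {n : ℕ // n ≤ m ∧ n % q ≤ n / q} := by
    refine Equiv.ofBijective
      (fun p => ⟨p.1.1 * q + p.1.2 * (q + 1), p.2.2, ?_⟩) ⟨?_, ?_⟩
    · obtain ⟨⟨i, j⟩, hj, hle⟩ := p
      have hjq : j < q := by omega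
      obtain ⟨h1, h2⟩ := key i j hjq
      simp only at h1 h2 ⊢
      omega
    · rintro ⟨⟨i₁, j₁⟩, hj₁, h₁⟩ ⟨⟨i₂, j₂⟩, hj₂, h₂⟩ h
      simp only [Subtype.mk.injEq] at h
      obtain ⟨hm₁, hd₁⟩ := key i₁ j₁ (by omega)
      obtain ⟨hm₂, hd₂⟩ := key i₂ j₂ (by omega)
      have hj : j₁ = j₂ := by rw [← hm₁, ← hm₂, h]
      have hi : i₁ = i₂ := by
        have := congrArg (· / q) h
        omega
      simp [hi, hj]
    · rintro ⟨n, hn, hd⟩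
      set r := n % q with hr
      set d := n / q with hdd
      have hrq : r < q := Nat.mod_lt n hq0
      have hdm : q * d + r = n := Nat.div_add_mod n q
      have hcomm : q * d = d * q := Nat.mul_comm q d
      have hsub : (d - r) * q = d * q - r * q := Nat.sub_mul d r q
      have hle : r * q ≤ d * q := Nat.mul_le_mul_right q hd
      have hr1 : r * (q + 1) = r * q + r := by ring
      have hval : (d - r) * q + r * (q + 1) = n := by omega
      refine ⟨⟨⟨d - r, r⟩, ?_, ?_⟩, ?_⟩
      · show r ≤ q - 1
        omega
      · show (d - r) * q + r * (q + 1) ≤ m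
        omega
      · exact Subtype.ext hval
  rw [Nat.card_congr e]
  -- convert to a Finset computation
  have e2 : {n : ℕ // n ≤ m ∧ n % q ≤ n / q} ≃
      {n // n ∈ (Finset.range (m + 1)).filter (fun n => n % q ≤ n / q)} := by
    apply Equiv.subtypeEquivRight
    intro n
    simp [Nat.lt_succ_iff, and_comm]
  rw [Nat.card_congr e2, Nat.card_eq_fintype_card, Fintype.card_coe]
  -- count the complement (the "gaps")
  have hbad : ((Finset.range (m + 1)).filter (fun n => ¬ n % q ≤ n / q)).card
      = ∑ j ∈ Finset.range q, j := by
    have : (∑ j ∈ Finset.range q, j) =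
        ((Finset.range q).sigma (fun j => Finset.range j)).card := by
      rw [Finset.card_sigma]
      simp
    rw [this]
    apply Finset.card_bij (fun n _ => (⟨n % q, n / q⟩ : (_ : ℕ) × ℕ))
    · intro n hn
      simp only [Finset.mem_filter, Finset.mem_range, not_le] at hn
      simp [Finset.mem_sigma, Finset.mem_range, Nat.mod_lt n hq0, hn.2]
    · intro a ha b hb h
      have h1 : a % q = b % q := congrArg Sigma.fst h
      have h2 : a / q = b / q := congrArg Sigma.snd h
      have ha' := Nat.div_add_mod a q
      have hb' := Nat.div_add_mod b q
      rw [h1, h2] at ha'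
      omega
    · rintro ⟨r, d⟩ hrd
      simp only [Finset.mem_sigma, Finset.mem_range] at hrd
      obtain ⟨hrq, hdr⟩ := hrd
      refine ⟨q * d + r, ?_, ?_⟩
      · have hmod : (q * d + r) % q = r := by
          rw [Nat.mul_add_mod, Nat.mod_eq_of_lt hrq]
        have hdiv : (q * d + r) / q = d := by
          rw [Nat.mul_add_div hq0, Nat.div_eq_of_lt hrq]; omega
        have hle : q * d + r ≤ q * q - q - 1 := by
          have h2 : q * (d + 2) ≤ q * q := Nat.mul_le_mul_left q (by omega)
          have h3 : q * (d + 2) = q * d + 2 * q := by ring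
          omega
        simp only [Finset.mem_filter, Finset.mem_range, not_le]
        refine ⟨by omega, by omega⟩
      · have hmod : (q * d + r) % q = r := by
          rw [Nat.mul_add_mod, Nat.mod_eq_of_lt hrq]
        have hdiv : (q * d + r) / q = d := by
          rw [Nat.mul_add_div hq0, Nat.div_eq_of_lt hrq]; omega
        simp [hmod, hdiv]
  have hsplit := Finset.card_filter_add_card_filter_not
    (s := Finset.range (m + 1)) (p := fun n => n % q ≤ n / q)
  rw [Finset.card_range] at hsplit
  have hsum : (∑ j ∈ Finset.range q, j) * 2 = q * (q - 1) :=
    Finset.sum_range_id_mul_two q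
  have hqq1 : q * (q - 1) = q * q - q := by
    rw [Nat.mul_sub]; omega
  have hqq2 : 2 * q ≤ q * q := Nat.mul_le_mul_right q hq2
  omega
end

section
/- Let q be a prime power and m = L + T + q(q−1)/2 − 1 for positive integers L, T. Then |I(m)| = L + T, where I(m) = {(i,j) ∈ ℕ² : 0 ≤ j ≤ q−1, iq + j(q+1) ≤ m}, provided q(q−1) − 2 < L + T + q(q−1)/2 − 1 < q³. -/
open Finset

private def Fm (q m : ℕ) : Finset (ℕ × ℕ) :=
  (Finset.range (m+1) ×ˢ Finset.range q).filter
    (fun p => p.2 ≤ q - 1 ∧ p.1 * q + p.2 * (q + 1) ≤ m)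

private lemma mem_Fm {q m : ℕ} (hq : 2 ≤ q) (p : ℕ × ℕ) :
    p ∈ Fm q m ↔ p.2 ≤ q - 1 ∧ p.1 * q + p.2 * (q + 1) ≤ m := by
  simp only [Fm, mem_filter, mem_product, mem_range]
  constructor
  · tauto
  · rintro ⟨h1, h2⟩
    have hp1 : p.1 ≤ p.1 * q := Nat.le_mul_of_pos_right _ (by omega)
    exact ⟨⟨by omega, by omega⟩, h1, h2⟩

private lemma val_inj {q i1 j1 i2 j2 : ℕ} (hq : 2 ≤ q) (h1 : j1 < q) (h2 : j2 < q)
    (h : i1 * q + j1 * (q + 1) = i2 * q + j2 * (q + 1)) : i1 = i2 ∧ j1 = j2 := by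
  have e1 : q * (i1 + j1) + j1 = q * (i2 + j2) + j2 := by
    have l : i1 * q + j1 * (q + 1) = q * (i1 + j1) + j1 := by ring
    have r : i2 * q + j2 * (q + 1) = q * (i2 + j2) + j2 := by ring
    omega
  have hj : j1 = j2 := by
    have hm := congrArg (· % q) e1
    simpa [Nat.mul_add_mod, Nat.mod_eq_of_lt h1, Nat.mod_eq_of_lt h2] using hm
  subst hj
  have h3 : q * (i1 + j1) = q * (i2 + j1) := by omega
  have := Nat.eq_of_mul_eq_mul_left (by omega : 0 < q) h3
  omega

private lemma step {q m : ℕ} (hq : 2 ≤ q) (hm : q * (q - 1) ≤ m + 1) :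
    (Fm q (m+1)).card = (Fm q m).card + 1 := by
  obtain ⟨r, rfl⟩ : ∃ r, q = r + 2 := ⟨q - 2, by omega⟩
  set q := r + 2 with hqdef
  set n := m + 1 with hn
  set j := n % q with hjdef
  set a := n / q with hadef
  have hdm : q * a + j = n := Nat.div_add_mod n q
  have hj : j < q := Nat.mod_lt _ (by omega)
  have he : q * (q - 1) = r * r + 3 * r + 2 := by
    have h1 : q - 1 = r + 1 := by omega
    rw [h1, hqdef]; ring
  have hij : j ≤ a := by
    by_contra hc
    push_neg at hc
    have ha2 : a ≤ r := by omega
    have h4 : q * a ≤ q * r := Nat.mul_le_mul_left _ ha2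
    have h5 : q * r = r * r + 2 * r := by rw [hqdef]; ring
    omega
  set i := a - j with hidef
  have hval : i * q + j * (q + 1) = n := by
    have hia : i + j = a := by omega
    have h6 : i * q + j * (q + 1) = q * (i + j) + j := by ring
    rw [h6, hia]
    omega
  have hins : Fm q (m+1) = insert (i, j) (Fm q m) := by
    ext p
    rw [mem_insert, mem_Fm hq, mem_Fm hq]
    constructor
    · rintro ⟨hb1, hb2⟩
      rcases Nat.lt_or_ge (p.1 * q + p.2 * (q + 1)) (m + 1) with h | h
      · exact Or.inr ⟨hb1, by omega⟩
      · have heq : p.1 * q + p.2 * (q + 1) = i * q + j * (q + 1) := by omega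
        obtain ⟨e1, e2⟩ := val_inj hq (by omega) hj heq
        left
        exact Prod.ext e1 e2
    · rintro (rfl | ⟨hb1, hb2⟩)
      · exact ⟨by omega, by show i * q + j * (q+1) ≤ m + 1; omega⟩
      · exact ⟨hb1, by omega⟩
  have hnotmem : (i, j) ∉ Fm q m := by
    rw [mem_Fm hq]
    rintro ⟨-, h⟩
    simp only at h
    omega
  rw [hins, Finset.card_insert_of_notMem hnotmem]

private lemma base {q : ℕ} (hq : 2 ≤ q) :
    (Fm q (q * (q - 1) - 1)).card = q * (q - 1) / 2 := by
  obtain ⟨r, rfl⟩ : ∃ r, q = r + 2 := ⟨q - 2, by omega⟩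
  set q := r + 2 with hqdef
  have he : q * (q - 1) = r * r + 3 * r + 2 := by
    have h1 : q - 1 = r + 1 := by omega
    rw [h1, hqdef]; ring
  have hm1 : q * (q - 1) - 1 = r * r + 3 * r + 1 := by omega
  have hT : Fm q (q * (q - 1) - 1)
      = (Finset.range (r+1)).biUnion (fun i => {i} ×ˢ Finset.range (r + 1 - i)) := by
    ext p
    rw [mem_Fm hq, hm1]
    simp only [mem_biUnion, mem_range, mem_product, mem_singleton]
    constructor
    · rintro ⟨h1, h2⟩
      have hs : p.1 + p.2 ≤ r := by
        by_contra hc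
        push_neg at hc
        have hle : (r + 1) * q ≤ (p.1 + p.2) * q := Nat.mul_le_mul_right _ (by omega)
        have hexp : p.1 * q + p.2 * (q + 1) = (p.1 + p.2) * q + p.2 := by ring
        have hv : (r + 1) * q = r * r + 3 * r + 2 := by rw [hqdef]; ring
        omega
      exact ⟨p.1, by omega, rfl, by omega⟩
    · rintro ⟨i, hi, rfl, h2⟩
      have hs : p.1 + p.2 ≤ r := by omega
      refine ⟨by omega, ?_⟩
      have hexp : p.1 * q + p.2 * (q + 1) = (p.1 + p.2) * q + p.2 := by ring
      have hle : (p.1 + p.2) * q ≤ r * q := Nat.mul_le_mul_right _ hs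
      have hv : r * q = r * r + 2 * r := by rw [hqdef]; ring
      omega
  rw [hT, Finset.card_biUnion]
  · have hcard : ∀ i ∈ Finset.range (r+1),
        ({i} ×ˢ Finset.range (r + 1 - i)).card = r + 1 - i := by
      intro i _
      rw [Finset.card_product, Finset.card_singleton, Finset.card_range, one_mul]
    rw [Finset.sum_congr rfl hcard]
    have hrefl : ∑ i ∈ Finset.range (r+1), (r + 1 - i)
        = ∑ i ∈ Finset.range (r+1), (i + 1) := by
      rw [← Finset.sum_range_reflect]
      apply Finset.sum_congr rfl
      intro i hi
      rw [mem_range] at hi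
      omega
    have h1 : ∑ i ∈ Finset.range (r+1), (i + 1)
        = (∑ i ∈ Finset.range (r+1), i) + (r + 1) := by
      rw [Finset.sum_add_distrib, Finset.sum_const, Finset.card_range, smul_eq_mul, mul_one]
    have h2 : (∑ i ∈ Finset.range (r+1), i) * 2 = (r+1) * ((r+1) - 1) :=
      Finset.sum_range_id_mul_two _
    have h3 : (r+1) * ((r+1) - 1) = r * r + r := by
      have : (r+1) - 1 = r := by omega
      rw [this]; ring
    rw [hrefl, h1]
    omega
  · intro x hx y hy hxy
    simp only [Finset.disjoint_left, mem_product, mem_singleton]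
    rintro p ⟨rfl, -⟩ ⟨h, -⟩
    exact hxy h

private lemma formula {q : ℕ} (hq : 2 ≤ q) (k : ℕ) :
    (Fm q (q * (q - 1) - 1 + k)).card = q * (q - 1) / 2 + k := by
  induction k with
  | zero => simpa using base hq
  | succ k ih =>
    have he : 2 ≤ q * (q - 1) := by
      have h1 : 1 ≤ q - 1 := by omega
      have h2 := Nat.mul_le_mul hq h1
      omega
    have heq : q * (q - 1) - 1 + (k + 1) = (q * (q - 1) - 1 + k) + 1 := by omega
    have hm' : q * (q - 1) ≤ (q * (q - 1) - 1 + k) + 1 := by omega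
    rw [heq, step hq hm', ih]
    omega

/-- For a prime power `q`, positive integers `L, T`, and `m = L + T + q(q-1)/2 - 1` with
`q(q-1) - 2 < m < q³`, the index set `I(m)` has exactly `L + T` elements. -/
theorem card_I_m_eq_L_add_T (q L T : ℕ) (hq : IsPrimePow q) (hL : 0 < L) (hT : 0 < T)
    (hlow : q * (q - 1) - 2 < L + T + q * (q - 1) / 2 - 1)
    (hhigh : L + T + q * (q - 1) / 2 - 1 < q ^ 3) :
    Nat.card {p : ℕ × ℕ //
        p.2 ≤ q - 1 ∧ p.1 * q + p.2 * (q + 1) ≤ L + T + q * (q - 1) / 2 - 1}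
      = L + T := by
  have hq2 : 2 ≤ q := hq.two_le
  have heven : Even (q * (q - 1)) := by
    have h := Nat.even_mul_succ_self (q - 1)
    have h2 : (q - 1) * (q - 1 + 1) = q * (q - 1) := by
      rw [Nat.mul_comm]
      congr 1
      omega
    rwa [h2] at h
  obtain ⟨g, hg⟩ := heven
  have hdiv : q * (q - 1) / 2 = g := by omega
  rw [hdiv] at hlow ⊢
  have he2 : 2 ≤ q * (q - 1) := by
    have h1 : 1 ≤ q - 1 := by omega
    have h2 := Nat.mul_le_mul hq2 h1
    omega
  have hk : L + T + g - 1 = q * (q - 1) - 1 + (L + T - g) := by omega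
  have hfin : L + T = q * (q - 1) / 2 + (L + T - g) := by omega
  have hiff : ∀ p : ℕ × ℕ,
      (p.2 ≤ q - 1 ∧ p.1 * q + p.2 * (q + 1) ≤ L + T + g - 1)
        ↔ p ∈ Fm q (L + T + g - 1) := fun p => (mem_Fm hq2 p).symm
  rw [Nat.card_congr (Equiv.subtypeEquivRight hiff), Nat.card_eq_finsetCard,
    hk, formula hq2]
  exact hfin.symm
end
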